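/- Every algebraically closed group Γ has commuting cyclic conjugates: for every finitely generated subgroup H = ⟨g₁,…,g_n⟩ ≤ Γ, the system of equations [g_i, x g_j x^{-1}] = e and [g_i, x²] = e (1 ≤ i,j ≤ n) has a solution in some overgroup of Γ (namely the wreath product Γ ≀ ℤ/2, taking x the generator of ℤ/2), hence has a solution t ∈ Γ, which satisfies [H, tHt^{-1}] = 1 and [H, t²] = 1. -/

import Mathlib

universe u

/-- An overgroup of `Γ`: a group together with an injective homomorphism from `Γ`. -/
structure Overgroup (Γ : Type u) [Group Γ] : Type (u + 1) where
  carrier : Type u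
  [grp : Group carrier]
  emb : Γ →* carrier
  inj : Function.Injective emb

attribute [instance] Overgroup.grp

/-- A finite system of equations with constants in `Γ` and variables `x₁, …, x_m`
(encoded as elements of the free group on `Γ ⊕ Fin m`) has a solution in `Λ`
(with constants interpreted via `i : Γ →* Λ`) if the variables can be given
values in `Λ` making every equation hold. -/
def SolvesIn {Γ : Type u} [Group Γ] {Λ : Type u} [Group Λ] (i : Γ →* Λ)
    {m k : ℕ} (w : Fin k → FreeGroup (Γ ⊕ Fin m)) : Prop :=
  ∃ v : Fin m → Λ, ∀ j : Fin k, FreeGroup.lift (Sum.elim (⇑i) v) (w j) = 1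

/-- A group `Γ` is *algebraically closed* if every finite system of equations with
constants in `Γ` that has a solution in some overgroup of `Γ` already has a
solution in `Γ`. -/
def IsAlgebraicallyClosedGroup (Γ : Type u) [Group Γ] : Prop :=
  ∀ (m k : ℕ) (w : Fin k → FreeGroup (Γ ⊕ Fin m)),
    (∃ O : Overgroup Γ, SolvesIn O.emb w) → SolvesIn (MonoidHom.id Γ) w

/-- A group `G` has *commuting cyclic conjugates* if for every finitely generated
subgroup `H ≤ G` there exist `t ∈ G` and `n ∈ ℕ_{≥2} ∪ {∞}` such that
`[H, t^p H t^{-p}] = 1` for all `1 ≤ p < n` and `[H, t^n] = 1` (reading `t^∞ = 1`). -/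
def CommutingCyclicConjugates (G : Type u) [Group G] : Prop :=
  ∀ H : Subgroup G, H.FG → ∃ (t : G) (n : ℕ∞), 2 ≤ n ∧
    (∀ p : ℕ, 1 ≤ p → (p : ℕ∞) < n →
      ∀ h ∈ H, ∀ h' ∈ H, Commute h (t ^ p * h' * (t ^ p)⁻¹)) ∧
    (∀ m : ℕ, (m : ℕ∞) = n → ∀ h ∈ H, Commute h (t ^ m))

/-!
The system `[gᵢ, x gⱼ x⁻¹] = 1`, `[gᵢ, x²] = 1` over generators `gᵢ` of `H` is solved in the
regular wreath product `Γ ≀ ℤ/2` by the generator `x` of `ℤ/2`: conjugating the first base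
coordinate by `x` moves it to the second one, and `x² = 1`. By algebraic closedness it has a
solution `t ∈ Γ`; the relations pass from the generators to `H`, giving `n = 2`.
-/

namespace RegularWreathProduct

variable {D Q : Type*} [Group D] [Group Q]

def ofLeft : (Q → D) →* D ≀ᵣ Q where
  toFun f := ⟨f, 1⟩
  map_one' := rfl
  map_mul' f g := by ext <;> simp

@[simp] lemma left_ofLeft (f : Q → D) : (ofLeft f).left = f := rfl

lemma inl_mul_ofLeft_mul_inv (q : Q) (f : Q → D) :
    inl q * ofLeft f * (inl q)⁻¹ = ofLeft fun x ↦ f (q⁻¹ * x) := by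
  ext <;> simp [ofLeft]

variable [DecidableEq Q]

def single : D →* D ≀ᵣ Q := ofLeft.comp (MonoidHom.mulSingle (fun _ : Q ↦ D) 1)

lemma single_injective : Function.Injective (single : D →* D ≀ᵣ Q) := fun a b hab ↦ by
  simpa [single] using congrFun (congrArg left hab) 1

lemma inl_mul_single_mul_inv (q : Q) (d : D) :
    inl q * single d * (inl q)⁻¹ = ofLeft (Pi.mulSingle q d) := by
  rw [single, MonoidHom.comp_apply, inl_mul_ofLeft_mul_inv]
  congr 1
  ext x
  simp [Pi.mulSingle_apply, inv_mul_eq_one, eq_comm]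

lemma commute_single_inl_pow_of_pow_eq_one {q : Q} {n : ℕ} (hq : q ^ n = 1) (a : D) :
    Commute (single a) (inl q ^ n) := by
  rw [← map_pow, hq, map_one]
  exact .one_right _

lemma commute_single_inl_conj {q : Q} (hq : q ≠ 1) (a b : D) :
    Commute (single a) (inl q * single b * (inl q)⁻¹) := by
  rw [inl_mul_single_mul_inv]
  exact (Pi.mulSingle_commute hq.symm a b).map ofLeft

end RegularWreathProduct

section Equations

open scoped commutatorElement

variable {Γ Λ : Type u} [Group Γ] [Group Λ]

lemma solvesIn_get_iff (i : Γ →* Λ) {m : ℕ} (L : List (FreeGroup (Γ ⊕ Fin m))) :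
    SolvesIn i L.get ↔ ∃ v : Fin m → Λ, ∀ w ∈ L, FreeGroup.lift (Sum.elim i v) w = 1 := by
  simp only [SolvesIn, List.forall_mem_iff_getElem, List.get_eq_getElem, Fin.forall_iff]

noncomputable def commutingConjugatesEquations (S : Finset Γ) : List (FreeGroup (Γ ⊕ Fin 1)) :=
  let x : FreeGroup (Γ ⊕ Fin 1) := .of (.inr 0)
  let c (a : Γ) : FreeGroup (Γ ⊕ Fin 1) := .of (.inl a)
  (S ×ˢ S).toList.map (fun p ↦ ⁅c p.1, x * c p.2 * x⁻¹⁆) ++ S.toList.map fun a ↦ ⁅c a, x ^ 2⁆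

lemma solvesIn_commutingConjugatesEquations_iff (i : Γ →* Λ) (S : Finset Γ) :
    SolvesIn i (commutingConjugatesEquations S).get ↔ ∃ x : Λ,
      (∀ a ∈ S, ∀ b ∈ S, Commute (i a) (x * i b * x⁻¹)) ∧ ∀ a ∈ S, Commute (i a) (x ^ 2) := by
  simp only [solvesIn_get_iff, commutingConjugatesEquations, List.forall_mem_append,
    List.forall_mem_map, Finset.mem_toList, Prod.forall, Finset.mem_product, and_imp,
    map_commutatorElement, commutatorElement_eq_one_iff_commute, map_mul, map_inv, map_pow,
    FreeGroup.lift_apply_of, Sum.elim_inl, Sum.elim_inr]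
  exact ⟨fun ⟨v, hconj, hsq⟩ ↦ ⟨v 0, fun a ha b hb ↦ hconj a b ha hb, hsq⟩,
    fun ⟨x, hconj, hsq⟩ ↦ ⟨fun _ ↦ x, fun a b ha hb ↦ hconj a ha b hb, hsq⟩⟩

end Equations

namespace Subgroup

variable {G : Type*} [Group G]

lemma commute_of_mem_closure {S T : Set G} (h : ∀ a ∈ S, ∀ b ∈ T, Commute a b) {a b : G}
    (ha : a ∈ closure S) (hb : b ∈ closure T) : Commute a b := by
  have hle : closure S ≤ centralizer (closure T) := by
    rw [centralizer_closure, closure_le]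
    exact fun a ha b hb ↦ (h a ha b hb).symm
  exact (hle ha b hb).symm

lemma commute_conj_of_mem_closure {S : Set G} {t : G}
    (h : ∀ a ∈ S, ∀ b ∈ S, Commute a (t * b * t⁻¹)) {a b : G}
    (ha : a ∈ closure S) (hb : b ∈ closure S) : Commute a (t * b * t⁻¹) := by
  refine commute_of_mem_closure (T := MulAut.conj t '' S) (by simpa using h) ha ?_
  have := mem_map_of_mem (MulAut.conj t).toMonoidHom hb
  rw [MonoidHom.map_closure] at this
  simpa using this

end Subgroup

/-- Every algebraically closed group has commuting cyclic conjugates. -/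
theorem algebraicallyClosed_commutingCyclicConjugates (Γ : Type u) [Group Γ]
    (h : IsAlgebraicallyClosedGroup Γ) : CommutingCyclicConjugates Γ := by
  rintro H ⟨S, rfl⟩
  have hx : Multiplicative.ofAdd (1 : ZMod 2) ≠ 1 := by decide
  have hx2 : Multiplicative.ofAdd (1 : ZMod 2) ^ 2 = 1 := by decide
  have hsolvable : ∃ O : Overgroup Γ, SolvesIn O.emb (commutingConjugatesEquations S).get :=
    ⟨⟨Γ ≀ᵣ Multiplicative (ZMod 2), RegularWreathProduct.single,
        RegularWreathProduct.single_injective⟩,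
      (solvesIn_commutingConjugatesEquations_iff _ S).2 ⟨RegularWreathProduct.inl (.ofAdd 1),
        fun a _ b _ ↦ RegularWreathProduct.commute_single_inl_conj hx a b,
        fun a _ ↦ RegularWreathProduct.commute_single_inl_pow_of_pow_eq_one hx2 a⟩⟩
  obtain ⟨t, hconj, hsq⟩ :=
    (solvesIn_commutingConjugatesEquations_iff _ S).1 (h _ _ _ hsolvable)
  refine ⟨t, 2, le_rfl, fun p hp1 hp2 ↦ ?_, fun m hm ↦ ?_⟩
  · obtain rfl : p = 1 := le_antisymm (Nat.lt_succ_iff.1 (by exact_mod_cast hp2)) hp1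
    simpa using fun a ha b hb ↦ Subgroup.commute_conj_of_mem_closure hconj ha hb
  · obtain rfl : m = 2 := by exact_mod_cast hm
    exact fun a ha ↦ Subgroup.commute_of_mem_closure (T := {t ^ 2}) (by simpa using hsq) ha
      (Subgroup.subset_closure rfl)
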